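/- arXiv:2511.22419 — 2 statements merged into one kernel-verified Lean document; each statement's English description precedes it below -/
import Mathlib

section
/- The depth circuit algebra D, with objects ℕ and morphisms from k₁ to k₂ being triples (A, v, w) of a k₁ × k₂ tropical matrix A, a 1 × k₁ tropical row vector v, and a k₂ × 1 tropical column vector w, with composition (A₁,v₁,w₁);(A₂,v₂,w₂) = (A₁A₂, max(v₁A₂, v₂), max(w₁, A₁w₂)) and identity (I_k, 0_{1×k}, 0_{k×1}), forms a category (i.e., composition is associative and unital). -/
/-- Max-plus tropical semiring carrier, `⊥` playing the role of `−∞`. -/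
abbrev Trop := WithBot ℕ

/-- Tropical matrix multiplication: `(A·B)_{ij} = max_l (A_{il} + B_{lj})`. -/
def tmul {α β γ : Type} [Fintype β] (A : α → β → Trop) (B : β → γ → Trop) :
    α → γ → Trop :=
  fun i j => Finset.univ.sup fun l => A i l + B l j

/-- The tropical identity matrix. -/
def tid (α : Type) [DecidableEq α] : α → α → Trop :=
  fun i j => if i = j then (0 : Trop) else ⊥

/-- A morphism of the depth circuit algebra `D` from (an index type of
cardinality) `k₁` to `k₂`: a triple `(A, v, w)` of a `k₁ × k₂` tropical
matrix `A`, a tropical row vector `v` (the `1 × k`-shaped component), and a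
tropical column vector `w` (the `k × 1`-shaped component), with the indexing
chosen so that the composition formula
`(A₁,v₁,w₁);(A₂,v₂,w₂) = (A₁A₂, max(v₁A₂, v₂), max(w₁, A₁w₂))` is
well-typed. -/
def DHom (ι κ : Type) : Type :=
  (ι → κ → Trop) × (κ → Trop) × (ι → Trop)

/-- Composition in `D`:
`(A₁,v₁,w₁);(A₂,v₂,w₂) = (A₁A₂, max(v₁A₂, v₂), max(w₁, A₁w₂))`,
with tropical matrix/vector products and componentwise `max`. -/
def dcomp {ι κ ρ : Type} [Fintype κ] (f : DHom ι κ) (g : DHom κ ρ) : DHom ι ρ :=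
  (tmul f.1 g.1,
   fun j => max (Finset.univ.sup fun l => f.2.1 l + g.1 l j) (g.2.1 j),
   fun i => max (f.2.2 i) (Finset.univ.sup fun l => f.1 i l + g.2.2 l))

/-- The identity morphism `(I_k, 0_{1×k}, 0_{k×1})`, where the `0` vectors
are filled with the tropical zero `−∞`. -/
def did (ι : Type) [DecidableEq ι] : DHom ι ι :=
  (tid ι, fun _ => ⊥, fun _ => ⊥)

section Aux

variable {α β γ δ : Type} [Fintype β] [Fintype γ]

lemma const_add_sup (a : Trop) (f : β → Trop) :
    a + Finset.univ.sup f = Finset.univ.sup fun b => a + f b := by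
  classical
  refine Finset.comp_sup_eq_sup_comp (a + ·) (fun x y => ?_) ?_
  · exact (max_add_add_left a x y).symm
  · exact WithBot.add_bot a

lemma sup_add_const (f : β → Trop) (a : Trop) :
    Finset.univ.sup f + a = Finset.univ.sup fun b => f b + a := by
  classical
  refine Finset.comp_sup_eq_sup_comp (· + a) (fun x y => ?_) ?_
  · exact (max_add_add_right x y a).symm
  · exact WithBot.bot_add a

lemma sup_tid_add [DecidableEq β] (i : β) (f : β → Trop) :
    (Finset.univ.sup fun l => tid β i l + f l) = f i := by
  refine le_antisymm (Finset.sup_le fun l _ => ?_) ?_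
  · unfold tid
    by_cases h : i = l
    · subst h; simp
    · simp [h]
  · have := Finset.le_sup (f := fun l => tid β i l + f l) (Finset.mem_univ i)
    simpa [tid] using this

lemma sup_add_tid [DecidableEq β] (f : β → Trop) (j : β) :
    (Finset.univ.sup fun l => f l + tid β l j) = f j := by
  refine le_antisymm (Finset.sup_le fun l _ => ?_) ?_
  · unfold tid
    by_cases h : l = j
    · subst h; simp
    · simp [h]
  · have := Finset.le_sup (f := fun l => f l + tid β l j) (Finset.mem_univ j)
    simpa [tid] using this

lemma tmul_assoc (A : α → β → Trop) (B : β → γ → Trop) (C : γ → δ → Trop) :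
    tmul (tmul A B) C = tmul A (tmul B C) := by
  funext i j
  unfold tmul
  calc (Finset.univ.sup fun l => (Finset.univ.sup fun m => A i m + B m l) + C l j)
      = Finset.univ.sup fun l => Finset.univ.sup fun m => A i m + B m l + C l j := by
        refine Finset.sup_congr rfl fun l _ => ?_
        rw [sup_add_const]
    _ = Finset.univ.sup fun m => Finset.univ.sup fun l => A i m + (B m l + C l j) := by
        rw [Finset.sup_comm]
        refine Finset.sup_congr rfl fun m _ => Finset.sup_congr rfl fun l _ => ?_
        rw [add_assoc]
    _ = Finset.univ.sup fun m => A i m + Finset.univ.sup fun l => B m l + C l j := by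
        refine Finset.sup_congr rfl fun m _ => ?_
        rw [const_add_sup]

end Aux

/-- The depth circuit algebra `D` forms a category: composition of the
triples `(A, v, w)` is unital (with identity `(I_k, 0_{1×k}, 0_{k×1})`) and
associative. -/

theorem depth_algebra_forms_category :
    (∀ (k₁ k₂ : ℕ) (f : DHom (Fin k₁) (Fin k₂)), dcomp (did (Fin k₁)) f = f) ∧
    (∀ (k₁ k₂ : ℕ) (f : DHom (Fin k₁) (Fin k₂)), dcomp f (did (Fin k₂)) = f) ∧
    (∀ (k₁ k₂ k₃ k₄ : ℕ) (f : DHom (Fin k₁) (Fin k₂)) (g : DHom (Fin k₂) (Fin k₃))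
      (h : DHom (Fin k₃) (Fin k₄)),
      dcomp (dcomp f g) h = dcomp f (dcomp g h)) := by
  
  refine ⟨fun k₁ k₂ f => ?_, fun k₁ k₂ f => ?_, fun k₁ k₂ k₃ k₄ f g h => ?_⟩
  · obtain ⟨A, v, w⟩ := f
    refine Prod.ext ?_ (Prod.ext ?_ ?_)
    · funext i j
      exact sup_tid_add i (fun l => A l j)
    · funext j
      simp [dcomp, did]
    · funext i
      have : (Finset.univ.sup fun l => tid (Fin k₁) i l + w l) = w i := sup_tid_add i w
      simp [dcomp, did, this]
  · obtain ⟨A, v, w⟩ := f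
    refine Prod.ext ?_ (Prod.ext ?_ ?_)
    · funext i j
      exact sup_add_tid (fun l => A i l) j
    · funext j
      have : (Finset.univ.sup fun l => v l + tid (Fin k₂) l j) = v j := sup_add_tid v j
      simp [dcomp, did, this]
    · funext i
      simp [dcomp, did]
  · obtain ⟨A₁, v₁, w₁⟩ := f
    obtain ⟨A₂, v₂, w₂⟩ := g
    obtain ⟨A₃, v₃, w₃⟩ := h
    refine Prod.ext (tmul_assoc A₁ A₂ A₃) (Prod.ext ?_ ?_)
    · funext j
      show max (Finset.univ.sup fun l =>
          (max (Finset.univ.sup fun m => v₁ m + A₂ m l) (v₂ l)) + A₃ l j) (v₃ j)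
        = max (Finset.univ.sup fun m => v₁ m + tmul A₂ A₃ m j)
            (max (Finset.univ.sup fun l => v₂ l + A₃ l j) (v₃ j))
      have e1 : (Finset.univ.sup fun l =>
          (max (Finset.univ.sup fun m => v₁ m + A₂ m l) (v₂ l)) + A₃ l j)
          = max (Finset.univ.sup fun l => (Finset.univ.sup fun m => v₁ m + A₂ m l) + A₃ l j)
              (Finset.univ.sup fun l => v₂ l + A₃ l j) := by
        rw [← Finset.sup_sup]
        refine Finset.sup_congr rfl fun l _ => ?_
        simp only [Pi.sup_apply]
        exact (max_add_add_right _ _ _).symm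
      have e2 : (Finset.univ.sup fun l => (Finset.univ.sup fun m => v₁ m + A₂ m l) + A₃ l j)
          = Finset.univ.sup fun m => v₁ m + tmul A₂ A₃ m j := by
        calc (Finset.univ.sup fun l => (Finset.univ.sup fun m => v₁ m + A₂ m l) + A₃ l j)
            = Finset.univ.sup fun l => Finset.univ.sup fun m => v₁ m + (A₂ m l + A₃ l j) := by
              refine Finset.sup_congr rfl fun l _ => ?_
              rw [sup_add_const]
              exact Finset.sup_congr rfl fun m _ => add_assoc _ _ _
          _ = Finset.univ.sup fun m => Finset.univ.sup fun l => v₁ m + (A₂ m l + A₃ l j) :=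
              Finset.sup_comm _ _ _
          _ = Finset.univ.sup fun m => v₁ m + tmul A₂ A₃ m j := by
              refine Finset.sup_congr rfl fun m _ => ?_
              rw [tmul, const_add_sup]
      rw [e1, e2, max_assoc]
    · funext i
      show max (max (w₁ i) (Finset.univ.sup fun m => A₁ i m + w₂ m))
          (Finset.univ.sup fun l => tmul A₁ A₂ i l + w₃ l)
        = max (w₁ i) (Finset.univ.sup fun m =>
            A₁ i m + max (w₂ m) (Finset.univ.sup fun l => A₂ m l + w₃ l))
      have e1 : (Finset.univ.sup fun m =>
          A₁ i m + max (w₂ m) (Finset.univ.sup fun l => A₂ m l + w₃ l))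
          = max (Finset.univ.sup fun m => A₁ i m + w₂ m)
              (Finset.univ.sup fun m => A₁ i m + Finset.univ.sup fun l => A₂ m l + w₃ l) := by
        rw [← Finset.sup_sup]
        refine Finset.sup_congr rfl fun m _ => ?_
        simp only [Pi.sup_apply]
        exact (max_add_add_left _ _ _).symm
      have e2 : (Finset.univ.sup fun l => tmul A₁ A₂ i l + w₃ l)
          = Finset.univ.sup fun m => A₁ i m + Finset.univ.sup fun l => A₂ m l + w₃ l := by
        calc (Finset.univ.sup fun l => tmul A₁ A₂ i l + w₃ l)
            = Finset.univ.sup fun l => Finset.univ.sup fun m => A₁ i m + (A₂ m l + w₃ l) := by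
              refine Finset.sup_congr rfl fun l _ => ?_
              rw [tmul, sup_add_const]
              exact Finset.sup_congr rfl fun m _ => add_assoc _ _ _
          _ = Finset.univ.sup fun m => Finset.univ.sup fun l => A₁ i m + (A₂ m l + w₃ l) :=
              Finset.sup_comm _ _ _
          _ = Finset.univ.sup fun m => A₁ i m + Finset.univ.sup fun l => A₂ m l + w₃ l := by
              refine Finset.sup_congr rfl fun m _ => ?_
              rw [const_add_sup]
      rw [e1, e2, max_assoc]
end

section
/- Given a functor α : M → E into a preorder-enriched category E, the family of endofunctors on Set defined by T^{e : T → U}(X) := X × M^{≲e}(T,U), with unit η_T(x) = (x, id_T) : X → T^{id_{α T}}(X), multiplication μ((x,C),D) = (x, C;D) : T^{e₁}(T^{e₂}(X)) → T^{e₁;e₂}(X), and inclusion maps T^{e₁ ≲ e₂} : T^{e₁}(X) → T^{e₂}(X) whenever e₁ ≲ e₂, satisfies the category-graded monad laws of Orchard–Wadler–Eades: left and right unit laws, associativity, reflexivity and transitivity compatibility of the inclusions, and compatibility of inclusions with multiplication. -/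
open CategoryTheory

variable {M E : Type*} [Category M] [Category E] [∀ X Y : E, Preorder (X ⟶ Y)]

/-- The graded circuit monad: `T^{e : T → U}(X) := X × M^{≲e}(T,U)`, where
`M^{≲e}(T,U) = {C ∈ M(T,U) | α(C) ≤ e}`. -/
def Tg (α : M ⥤ E) (T U : M) (e : α.obj T ⟶ α.obj U) (X : Type*) : Type _ :=
  X × {C : T ⟶ U // α.map C ≤ e}

/-- Functorial action of `T^e` on `Set`. -/
def gmap (α : M ⥤ E) {T U : M} {e : α.obj T ⟶ α.obj U} {X Y : Type*}
    (f : X → Y) : Tg α T U e X → Tg α T U e Y :=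
  fun p => (f p.1, p.2)

/-- The unit `η_T(x) = (x, id_T) : X → T^{id_{αT}}(X)`. -/
def geta (α : M ⥤ E) (T : M) {X : Type*} (x : X) :
    Tg α T T (𝟙 (α.obj T)) X :=
  (x, ⟨𝟙 T, le_of_eq (α.map_id T)⟩)

/-- The multiplication `μ((x,C),D) = (x, D;C) : T^{e₁}(T^{e₂}(X)) → T^{e₁;e₂}(X)`
(the outer component is the first circuit, composed diagrammatically with the
inner one); it is well defined by monotonicity of composition in `E`. -/
def gmu (α : M ⥤ E)
    (hmono : ∀ (X Y Z : E) (e₁ d₁ : X ⟶ Y) (e₂ d₂ : Y ⟶ Z),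
      e₁ ≤ d₁ → e₂ ≤ d₂ → e₁ ≫ e₂ ≤ d₁ ≫ d₂)
    {T U S : M} {e₁ : α.obj T ⟶ α.obj U} {e₂ : α.obj U ⟶ α.obj S}
    {X : Type*} (q : Tg α T U e₁ (Tg α U S e₂ X)) : Tg α T S (e₁ ≫ e₂) X :=
  (q.1.1, ⟨q.2.1 ≫ q.1.2.1, by
    rw [α.map_comp]
    exact hmono _ _ _ _ _ _ _ q.2.2 q.1.2.2⟩)

/-- The coercion `T^{e₁ ≲ e₂} : T^{e₁}(X) → T^{e₂}(X)` (an inclusion). -/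
def gincl (α : M ⥤ E) {T U : M} {e₁ e₂ : α.obj T ⟶ α.obj U}
    (h : e₁ ≤ e₂) {X : Type*} : Tg α T U e₁ X → Tg α T U e₂ X :=
  fun p => (p.1, ⟨p.2.1, le_trans p.2.2 h⟩)

theorem Tg_heq (α : M ⥤ E) {T U : M} {e e' : α.obj T ⟶ α.obj U} {X : Type*}
    (he : e = e') (p : Tg α T U e X) (p' : Tg α T U e' X)
    (h1 : p.1 = p'.1) (h2 : p.2.1 = p'.2.1) : HEq p p' := by
  subst he
  exact heq_of_eq (Prod.ext h1 (Subtype.ext h2))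

/-- Given a functor `α : M → E` into a preorder-enriched category `E` with
monotone composition, the family `T^{e}(X) := X × M^{≲e}(T,U)` with the above
unit, multiplication and inclusions satisfies the category-graded monad laws
of Orchard–Wadler–Eades: left/right unit, associativity, reflexivity and
transitivity compatibility of the inclusions, and compatibility of the
inclusions with the multiplication. (The unit and associativity laws are
stated as heterogeneous equalities, since the grades `𝟙 ≫ e` and `e`, etc.,
agree only propositionally.) -/
theorem graded_circuit_monad_laws (α : M ⥤ E)
    (hmono : ∀ (X Y Z : E) (e₁ d₁ : X ⟶ Y) (e₂ d₂ : Y ⟶ Z),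
      e₁ ≤ d₁ → e₂ ≤ d₂ → e₁ ≫ e₂ ≤ d₁ ≫ d₂) :
    -- left unit law
    (∀ (T U : M) (e : α.obj T ⟶ α.obj U) (X : Type) (p : Tg α T U e X),
      HEq (gmu α hmono (geta α T p)) p) ∧
    -- right unit law
    (∀ (T U : M) (e : α.obj T ⟶ α.obj U) (X : Type) (p : Tg α T U e X),
      HEq (gmu α hmono (gmap α (geta α U) p)) p) ∧
    -- associativity
    (∀ (T U S R : M) (e₁ : α.obj T ⟶ α.obj U) (e₂ : α.obj U ⟶ α.obj S)
      (e₃ : α.obj S ⟶ α.obj R) (X : Type)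
      (q : Tg α T U e₁ (Tg α U S e₂ (Tg α S R e₃ X))),
      HEq (gmu α hmono (gmap α (gmu α hmono) q)) (gmu α hmono (gmu α hmono q))) ∧
    -- reflexivity of the coercions
    (∀ (T U : M) (e : α.obj T ⟶ α.obj U) (X : Type) (p : Tg α T U e X),
      gincl α (le_refl e) p = p) ∧
    -- transitivity of the coercions
    (∀ (T U : M) (e e' e'' : α.obj T ⟶ α.obj U) (h₁ : e ≤ e') (h₂ : e' ≤ e'')
      (X : Type) (p : Tg α T U e X),
      gincl α h₂ (gincl α h₁ p) = gincl α (le_trans h₁ h₂) p) ∧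
    -- compatibility of the coercions with the multiplication
    (∀ (T U S : M) (e₁ e₁' : α.obj T ⟶ α.obj U) (e₂ e₂' : α.obj U ⟶ α.obj S)
      (h₁ : e₁ ≤ e₁') (h₂ : e₂ ≤ e₂') (X : Type)
      (q : Tg α T U e₁ (Tg α U S e₂ X)),
      gmu α hmono (gincl α h₁ (gmap α (gincl α h₂) q)) =
        gincl α (hmono _ _ _ _ _ _ _ h₁ h₂) (gmu α hmono q)) := by
  refine ⟨?_, ?_, ?_, ?_, ?_, ?_⟩
  · intro T U e X p
    exact Tg_heq α (by simp) _ p rfl (by simp [gmu, geta])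
  · intro T U e X p
    exact Tg_heq α (by simp) _ p rfl (by simp [gmu, geta, gmap])
  · intro T U S R e₁ e₂ e₃ X q
    exact Tg_heq α (by simp) _ _ rfl (by simp [gmu, gmap])
  · intro T U e X p; rfl
  · intro T U e e' e'' h₁ h₂ X p; rfl
  · intro T U S e₁ e₁' e₂ e₂' h₁ h₂ X q; rfl
end
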